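/- arXiv:2503.10819 — 2 statements merged into one kernel-verified Lean document; each statement's English description precedes it below -/
import Mathlib

section
/- For every k ≥ 1, let φ_k = Fd ↔ (F^k v ∧ F^k h) over visible input v, hidden input h, and guided output d. Then φ_k is ({v},{h},∅,{d})-realizable by a TGE whose state space and environment memory set both have size O(k), whereas in the corresponding two-process distributed (pipeline) architecture — where process P₂ receives v and h and must produce d without receiving programs from P₁ — the process P₂ needs at least Ω(k²) states. -/
/-- LTL formulas over atomic propositions of type `α`. -/
inductive LTL (α : Type) : Type where
  | tt : LTL α
  | ff : LTL α
  | atom : α → LTL α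
  | not : LTL α → LTL α
  | and : LTL α → LTL α → LTL α
  | or : LTL α → LTL α → LTL α
  | next : LTL α → LTL α
  | untl : LTL α → LTL α → LTL α

namespace LTL

variable {α β : Type}

/-- Satisfaction of an LTL formula at position `j` of an infinite word. -/
def satAt (w : ℕ → Set α) : ℕ → LTL α → Prop
  | _, .tt => True
  | _, .ff => False
  | j, .atom a => a ∈ w j
  | j, .not φ => ¬ satAt w j φ
  | j, .and φ ψ => satAt w j φ ∧ satAt w j ψ
  | j, .or φ ψ => satAt w j φ ∨ satAt w j ψ
  | j, .next φ => satAt w (j+1) φ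
  | j, .untl φ ψ => ∃ k, j ≤ k ∧ satAt w k ψ ∧ ∀ l, j ≤ l → l < k → satAt w l φ

/-- A word satisfies a formula if it satisfies it at position 0. -/
def sat (w : ℕ → Set α) (φ : LTL α) : Prop := satAt w 0 φ

/-- Eventually. -/
def F (φ : LTL α) : LTL α := untl tt φ
/-- Always. -/
def G (φ : LTL α) : LTL α := not (F (not φ))
/-- Boolean equivalence. -/
def iff_ (φ ψ : LTL α) : LTL α := or (and φ ψ) (and (not φ) (not ψ))
/-- `Xpow k φ` is `X^k φ`. -/
def Xpow : ℕ → LTL α → LTL α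
  | 0, φ => φ
  | k+1, φ => next (Xpow k φ)
/-- `Fpow k φ` is `F^{k+1} φ`: "`φ` holds in at least `k+1` positions".
    (`F^1 p = F p`, `F^{j+1} p = F (p ∧ X (F^j p))`.) -/
def Fpow : ℕ → LTL α → LTL α
  | 0, φ => F φ
  | k+1, φ => F (and φ (next (Fpow k φ)))

/-- Relabeling of atoms. -/
def map (f : α → β) : LTL α → LTL β
  | .tt => .tt
  | .ff => .ff
  | .atom a => .atom (f a)
  | .not φ => .not (map f φ)
  | .and φ ψ => .and (map f φ) (map f ψ)
  | .or φ ψ => .or (map f φ) (map f ψ)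
  | .next φ => .next (map f φ)
  | .untl φ ψ => .untl (map f φ) (map f ψ)

/-- A formula is temporal-operator free (propositional). -/
def temporalFree : LTL α → Bool
  | .tt => true
  | .ff => true
  | .atom _ => true
  | .not φ => temporalFree φ
  | .and φ ψ => temporalFree φ && temporalFree ψ
  | .or φ ψ => temporalFree φ && temporalFree ψ
  | .next _ => false
  | .untl _ _ => false

/-- `props ψ`: the maximal propositional subformulas of `ψ`. -/
def props : LTL α → List (LTL α)
  | .tt => [.tt]
  | .ff => [.ff]
  | .atom a => [.atom a]
  | .not φ => if temporalFree (LTL.not φ) then [.not φ] else props φ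
  | .and φ ψ => if temporalFree (LTL.and φ ψ) then [.and φ ψ] else props φ ++ props ψ
  | .or φ ψ => if temporalFree (LTL.or φ ψ) then [.or φ ψ] else props φ ++ props ψ
  | .next φ => props φ
  | .untl φ ψ => props φ ++ props ψ

/-- All atoms of the formula satisfy predicate `p`. -/
def atomsAll (p : α → Bool) : LTL α → Bool
  | .tt => true
  | .ff => true
  | .atom a => p a
  | .not φ => atomsAll p φ
  | .and φ ψ => atomsAll p φ && atomsAll p ψ
  | .or φ ψ => atomsAll p φ && atomsAll p ψ
  | .next φ => atomsAll p φ
  | .untl φ ψ => atomsAll p φ && atomsAll p ψ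

/-- Maximal subformulas all of whose atoms satisfy `p` (used for `cl_H`). -/
def clP (p : α → Bool) : LTL α → List (LTL α)
  | .tt => []
  | .ff => []
  | .atom a => if p a then [.atom a] else []
  | .not φ => if atomsAll p (LTL.not φ) then [.not φ] else clP p φ
  | .and φ ψ => if atomsAll p (LTL.and φ ψ) then [.and φ ψ] else clP p φ ++ clP p ψ
  | .or φ ψ => if atomsAll p (LTL.or φ ψ) then [.or φ ψ] else clP p φ ++ clP p ψ
  | .next φ => clP p φ
  | .untl φ ψ => clP p φ ++ clP p ψ

/-- `clH p φ`: maximal subformulas of formulas in `props φ` all of whose atoms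
    satisfy `p` (i.e. are hidden signals). -/
def clH (p : α → Bool) (φ : LTL α) : List (LTL α) :=
  (props φ).foldr (fun ψ acc => clP p ψ ++ acc) []

/-- Propositional satisfaction of a formula by a single assignment. -/
def propSat (σ : Set α) (φ : LTL α) : Prop := satAt (fun _ => σ) 0 φ

end LTL

/-- A (full-visibility) finite-state transducer with inputs `ι`, outputs `o`
    and states `S`. -/
structure Transducer (ι o S : Type) where
  init : S
  trans : S → Set ι → S
  out : S → Set ι → Set o

namespace Transducer

variable {ι o S : Type}

/-- The run of a transducer on an input word. -/
def run (T : Transducer ι o S) (wI : ℕ → Set ι) : ℕ → S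
  | 0 => T.init
  | j+1 => T.trans (run T wI j) (wI j)

/-- The computation of a transducer on an input word, as a word over `2^{I ∪ O}`. -/
def comp (T : Transducer ι o S) (wI : ℕ → Set ι) (j : ℕ) : Set (ι ⊕ o) :=
  Sum.inl '' wI j ∪ Sum.inr '' T.out (T.run wI j) (wI j)

/-- `(I,O)`-realizability. -/
def Realizes (T : Transducer ι o S) (φ : LTL (ι ⊕ o)) : Prop :=
  ∀ wI, LTL.sat (T.comp wI) φ

end Transducer

/-- A transducer with a guided environment (TGE): visible inputs `ν`, hidden
    inputs `η`, controlled outputs `γc`, guided outputs `γg`, states `S`,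
    environment memory `M`.  Each transition emits an assignment to the
    controlled outputs together with a program `M × 2^H → M × 2^G`. -/
structure TGE (ν η γc γg S M : Type) where
  init : S
  m0 : M
  trans : S → Set ν → S
  out : S → Set ν → Set γc × (M → Set η → M × Set γg)

namespace TGE

variable {ν η γc γg S M : Type}

/-- The run of a TGE depends only on the visible inputs. -/
def run (T : TGE ν η γc γg S M) (wV : ℕ → Set ν) : ℕ → S
  | 0 => T.init
  | j+1 => T.trans (run T wV j) (wV j)

/-- The environment's memory sequence, obtained by iterating the emitted
    programs on the hidden inputs. -/
def mem (T : TGE ν η γc γg S M) (wV : ℕ → Set ν) (wH : ℕ → Set η) : ℕ → M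
  | 0 => T.m0
  | j+1 => ((T.out (T.run wV j) (wV j)).2 (mem T wV wH j) (wH j)).1

/-- The guided output at step `j`. -/
def guided (T : TGE ν η γc γg S M) (wV : ℕ → Set ν) (wH : ℕ → Set η) (j : ℕ) :
    Set γg :=
  ((T.out (T.run wV j) (wV j)).2 (T.mem wV wH j) (wH j)).2

/-- The computation of a TGE, over `2^{(V ∪ H) ∪ (C ∪ G)}`. -/
def comp (T : TGE ν η γc γg S M) (wV : ℕ → Set ν) (wH : ℕ → Set η) (j : ℕ) :
    Set ((ν ⊕ η) ⊕ (γc ⊕ γg)) :=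
  Sum.inl '' (Sum.inl '' wV j ∪ Sum.inr '' wH j) ∪
    Sum.inr '' (Sum.inl '' (T.out (T.run wV j) (wV j)).1 ∪
                 Sum.inr '' T.guided wV wH j)

/-- `(V,H,C,G)`-realizability of an LTL specification. -/
def Realizes (T : TGE ν η γc γg S M) (φ : LTL ((ν ⊕ η) ⊕ (γc ⊕ γg))) : Prop :=
  ∀ wV wH, LTL.sat (T.comp wV wH) φ

/-- `(V,H,C,G)`-realizability of an arbitrary language. -/
def RealizesL (T : TGE ν η γc γg S M)
    (L : Set (ℕ → Set ((ν ⊕ η) ⊕ (γc ⊕ γg)))) : Prop :=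
  ∀ wV wH, T.comp wV wH ∈ L

end TGE

/-- `φ_k = F d ↔ (F^k v ∧ F^k h)` with visible input `v`, hidden input `h`,
no controlled outputs, and guided output `d`. -/
def phi14 (k : ℕ) : LTL ((Unit ⊕ Unit) ⊕ (Empty ⊕ Unit)) :=
  LTL.iff_ (LTL.F (.atom (.inr (.inr ()))))
    (LTL.and (LTL.Fpow (k-1) (.atom (.inl (.inl ()))))
      (LTL.Fpow (k-1) (.atom (.inl (.inr ())))))

/-!
Upper bound: the system keeps in its state a counter of `v` capped at `k`, and at every step
sends the environment the program "increment your capped counter of `h`, and raise `d` iff both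
counters are full"; so `k + 1` states and `k + 1` memory values suffice.

Lower bound: for `a, b < k` the process `P₂` must be in pairwise distinct states after reading
`v^a h^b`. Suppose `a < a'` and the states after `v^a h^b` and `v^a' h^b'` agree, and extend both
words by `v^(k-a') h^ω`. The second word must raise `d` (it has `k` letters `v` and infinitely many
`h`), but not within its prefix, since the prefix followed by `∅^ω` has fewer than `k` letters
`v`. So `d` is raised after the prefix, and then also on the first word, which has only
`a + k - a' < k` letters `v`. The case `b < b'` is symmetric.
-/

section

open Nat (count)
open scoped Classical

theorem Nat.exists_count_succ_eq_of_count_lt (p : ℕ → Prop) {j n : ℕ}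
    (h : count p j < count p n) : ∃ i, j ≤ i ∧ p i ∧ count p (i + 1) = count p j + 1 := by
  induction n with
  | zero => simp at h
  | succ n ih =>
    by_cases hn : count p j < count p n
    · exact ih hn
    · have hpn : p n := Nat.count_lt_count_succ_iff.mp (by omega)
      have hjn : j ≤ n := by
        by_contra! hnj
        have := Nat.count_monotone p (show n + 1 ≤ j by omega)
        omega
      have hsucc := Nat.count_succ_eq_succ_count_iff.mpr hpn
      have := Nat.count_monotone p hjn
      exact ⟨n, hjn, hpn, by omega⟩

theorem Nat.count_add_one_le_count_succ (p : ℕ → Prop) {i j : ℕ} (hji : j ≤ i) (hi : p i) :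
    count p j + 1 ≤ count p (i + 1) := by
  rw [Nat.count_succ_eq_succ_count_iff.mpr hi]
  exact Nat.succ_le_succ (Nat.count_monotone p hji)

def HoldsAtLeast (k : ℕ) (p : ℕ → Prop) : Prop := ∃ n, k ≤ count p n

theorem holdsAtLeast_and_holdsAtLeast_iff {k : ℕ} {p q : ℕ → Prop} :
    HoldsAtLeast k p ∧ HoldsAtLeast k q ↔ ∃ n, k ≤ count p n ∧ k ≤ count q n := by
  constructor
  · rintro ⟨⟨n₁, h₁⟩, ⟨n₂, h₂⟩⟩
    exact ⟨max n₁ n₂, h₁.trans (Nat.count_monotone p (le_max_left _ _)),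
      h₂.trans (Nat.count_monotone q (le_max_right _ _))⟩
  · rintro ⟨n, hp, hq⟩
    exact ⟨⟨n, hp⟩, ⟨n, hq⟩⟩

namespace LTL

variable {α β : Type}

theorem satAt_F (w : ℕ → Set α) (j : ℕ) (φ : LTL α) :
    satAt w j (F φ) ↔ ∃ i, j ≤ i ∧ satAt w i φ := by
  simp [F, satAt]

theorem satAt_iff_ (w : ℕ → Set α) (j : ℕ) (φ ψ : LTL α) :
    satAt w j (iff_ φ ψ) ↔ (satAt w j φ ↔ satAt w j ψ) := by
  simp only [iff_, satAt]
  tauto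

theorem satAt_Fpow (w : ℕ → Set α) (j m : ℕ) (φ : LTL α) :
    satAt w j (Fpow m φ) ↔
      ∃ n, count (satAt w · φ) j + (m + 1) ≤ count (satAt w · φ) n := by
  induction m generalizing j with
  | zero =>
    rw [Fpow, satAt_F]
    constructor
    · rintro ⟨i, hji, hi⟩
      exact ⟨i + 1, Nat.count_add_one_le_count_succ (satAt w · φ) hji hi⟩
    · rintro ⟨n, hn⟩
      obtain ⟨i, hji, hi, -⟩ :=
        Nat.exists_count_succ_eq_of_count_lt (satAt w · φ) (j := j) (n := n) (by omega)
      exact ⟨i, hji, hi⟩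
  | succ m ih =>
    simp only [Fpow, satAt_F, satAt, ih]
    constructor
    · rintro ⟨i, hji, hi, n, hn⟩
      exact ⟨n, by have := Nat.count_add_one_le_count_succ (satAt w · φ) hji hi; omega⟩
    · rintro ⟨n, hn⟩
      obtain ⟨i, hji, hi, hcount⟩ :=
        Nat.exists_count_succ_eq_of_count_lt (satAt w · φ) (j := j) (n := n) (by omega)
      exact ⟨i, hji, hi, n, by omega⟩

theorem sat_Fpow (w : ℕ → Set α) (m : ℕ) (φ : LTL α) :
    sat w (Fpow m φ) ↔ HoldsAtLeast (m + 1) (fun i => satAt w i φ) := by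
  simp only [sat, satAt_Fpow, Nat.count_zero, zero_add, HoldsAtLeast]

theorem satAt_map (f : α → β) (w : ℕ → Set β) (φ : LTL α) (j : ℕ) :
    satAt w j (φ.map f) ↔ satAt (fun i => f ⁻¹' w i) j φ := by
  induction φ generalizing j <;> simp [map, satAt, *]

end LTL

theorem sat_phi14 {k : ℕ} (hk : 1 ≤ k)
    (w : ℕ → Set ((Unit ⊕ Unit) ⊕ (Empty ⊕ Unit))) :
    LTL.sat w (phi14 k) ↔
      ((∃ j, .inr (.inr ()) ∈ w j) ↔
        HoldsAtLeast k (fun i => .inl (.inl ()) ∈ w i) ∧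
          HoldsAtLeast k (fun i => .inl (.inr ()) ∈ w i)) := by
  obtain ⟨m, rfl⟩ : ∃ m, k = m + 1 := ⟨k - 1, by omega⟩
  have sat_Fpow_atom (a) : LTL.satAt w 0 (LTL.Fpow m (.atom a)) ↔
      HoldsAtLeast (m + 1) (fun i => a ∈ w i) :=
    LTL.sat_Fpow w m _
  simp only [LTL.sat, phi14, Nat.add_sub_cancel, LTL.satAt_iff_, LTL.satAt_F, LTL.satAt,
    sat_Fpow_atom, zero_le, true_and]

namespace Transducer

variable {ι o S : Type}

def Emits (T : Transducer ι o S) (w : ℕ → Set ι) (y : o) : Prop :=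
  ∃ j, y ∈ T.out (T.run w j) (w j)

theorem run_congr (T : Transducer ι o S) {w w' : ℕ → Set ι} {n : ℕ}
    (h : ∀ i < n, w i = w' i) : T.run w n = T.run w' n := by
  induction n with
  | zero => rfl
  | succ n ih => simp only [run, ih fun i hi => h i (by omega), h n (by omega)]

theorem run_add_congr (T : Transducer ι o S) {w w' : ℕ → Set ι} {m m' : ℕ}
    (h₀ : T.run w m = T.run w' m') (h : ∀ i, w (m + i) = w' (m' + i)) (t : ℕ) :
    T.run w (m + t) = T.run w' (m' + t) := by
  induction t with
  | zero => exact h₀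
  | succ t ih => exact congrArg₂ T.trans ih (h t)

theorem run_append_congr (T : Transducer ι o S) (p : List (Set ι)) (c c' : Stream' (Set ι))
    {n : ℕ} (hn : n ≤ p.length) : T.run (p ++ₛ c).get n = T.run (p ++ₛ c').get n :=
  T.run_congr fun i hi => by
    rw [Stream'.get_append_left _ _ _ (by omega), Stream'.get_append_left _ _ _ (by omega)]

theorem emits_of_run_eq (T : Transducer ι o S) {p p' : List (Set ι)} {c c₀ : Stream' (Set ι)}
    {y : o} (hrun : T.run (p ++ₛ c).get p.length = T.run (p' ++ₛ c).get p'.length)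
    (hemits : T.Emits (p' ++ₛ c).get y) (hnot : ¬ T.Emits (p' ++ₛ c₀).get y) :
    T.Emits (p ++ₛ c).get y := by
  obtain ⟨j, hj⟩ := hemits
  rcases lt_or_ge j p'.length with hj' | hj'
  · refine absurd ⟨j, ?_⟩ hnot
    rwa [T.run_append_congr p' c₀ c hj'.le, Stream'.get_append_left _ _ _ hj',
      ← Stream'.get_append_left _ _ c hj']
  · obtain ⟨t, rfl⟩ := Nat.exists_eq_add_of_le hj'
    have hinput (i : ℕ) : (p ++ₛ c).get (p.length + i) = (p' ++ₛ c).get (p'.length + i) := by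
      simp only [Stream'.get_append_right]
    refine ⟨p.length + t, ?_⟩
    rwa [T.run_add_congr hrun hinput t, hinput]

end Transducer

section StreamCount

variable {α : Type} {k : ℕ} {P : α → Prop}

theorem count_append_stream (l : List α) (s : Stream' α) (t : ℕ) :
    count (fun i => P ((l ++ₛ s).get i)) (l.length + t) =
      l.countP (P ·) + count (fun i => P (s.get i)) t := by
  rw [Nat.count_add]
  congr 1
  · induction l with
    | nil => exact Nat.count_zero _
    | cons a l ih =>
      rw [List.length_cons, Nat.count_succ', List.countP_cons, ← ih]
      congr 1
      by_cases h : P a <;> simp [h, Stream'.cons_append_stream, Stream'.get_zero_cons]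
  · simp only [Stream'.get_append_right]


theorem holdsAtLeast_append_stream {l : List α} (hl : k ≤ l.countP (P ·)) (s : Stream' α) :
    HoldsAtLeast k (fun i => P ((l ++ₛ s).get i)) :=
  ⟨l.length + 0, by rw [count_append_stream]; omega⟩

theorem HoldsAtLeast.append_stream {s : Stream' α} (h : HoldsAtLeast k (fun i => P (s.get i)))
    (l : List α) : HoldsAtLeast k (fun i => P ((l ++ₛ s).get i)) := by
  obtain ⟨n, hn⟩ := h
  exact ⟨l.length + n, by rw [count_append_stream]; omega⟩

theorem holdsAtLeast_const {a : α} (ha : P a) (k : ℕ) :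
    HoldsAtLeast k (fun i => P ((Stream'.const a).get i)) :=
  ⟨k, (Nat.count_iff_forall.mpr fun _ _ => ha).ge⟩

theorem not_holdsAtLeast_append_const {a : α} (ha : ¬ P a) {l : List α}
    (hl : l.countP (P ·) < k) :
    ¬ HoldsAtLeast k (fun i => P ((l ++ₛ Stream'.const a).get i)) := by
  rintro ⟨n, hn⟩
  have hmono := Nat.count_monotone (fun i => P ((l ++ₛ Stream'.const a).get i))
    (Nat.le_add_left n l.length)
  have hconst : count (fun i => P ((Stream'.const a).get i)) n = 0 :=
    Nat.count_iff_forall_not.mpr fun _ _ => ha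
  rw [count_append_stream, hconst] at hmono
  omega

end StreamCount

section Pipeline

variable {S₂ : Type} {P₂ : Transducer (Unit ⊕ Unit) Unit S₂} {k : ℕ}

theorem emits_iff_of_realizes (hk : 1 ≤ k)
    (hP : P₂.Realizes ((phi14 k).map (Sum.map id (Sum.elim Empty.elim id))))
    {x y : Unit ⊕ Unit} (hxy : x ≠ y) (w : ℕ → Set (Unit ⊕ Unit)) :
    P₂.Emits w () ↔
      HoldsAtLeast k (fun i => x ∈ w i) ∧ HoldsAtLeast k (fun i => y ∈ w i) := by
  have h := hP w
  rw [LTL.sat, LTL.satAt_map, ← LTL.sat, sat_phi14 hk] at h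
  simp only [Transducer.comp, Set.preimage_union, Set.mem_union, Set.mem_preimage, Sum.map_inr,
    Sum.elim_inr, id_eq, Set.mem_image, reduceCtorEq, and_false, exists_const, and_true, false_or,
    Sum.map_inl, Sum.inl.injEq, exists_eq_right, or_false, Unique.exists_iff] at h
  rw [Transducer.Emits, h]
  rcases x with ⟨⟨⟩⟩ | ⟨⟨⟩⟩ <;> rcases y with ⟨⟨⟩⟩ | ⟨⟨⟩⟩
  all_goals first | exact absurd rfl hxy | exact Iff.rfl | exact and_comm

theorem run_ne_of_countP_lt (hk : 1 ≤ k)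
    (hP : P₂.Realizes ((phi14 k).map (Sum.map id (Sum.elim Empty.elim id))))
    {x y : Unit ⊕ Unit} (hxy : x ≠ y) {p p' : List (Set (Unit ⊕ Unit))}
    (hlt : p.countP (x ∈ ·) < p'.countP (x ∈ ·)) (hp' : p'.countP (x ∈ ·) < k) :
    P₂.run (p ++ₛ Stream'.const ∅).get p.length ≠
      P₂.run (p' ++ₛ Stream'.const ∅).get p'.length := by
  intro hrun
  set r := List.replicate (k - p'.countP (x ∈ ·)) ({x} : Set (Unit ⊕ Unit))
  have hx : x ∉ ({y} : Set (Unit ⊕ Unit)) := hxy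
  have hrun' : P₂.run (p ++ₛ (r ++ₛ Stream'.const {y})).get p.length =
      P₂.run (p' ++ₛ (r ++ₛ Stream'.const {y})).get p'.length := by
    rwa [P₂.run_append_congr p _ (Stream'.const ∅) le_rfl,
      P₂.run_append_congr p' _ (Stream'.const ∅) le_rfl]
  have hemits : P₂.Emits (p' ++ₛ (r ++ₛ Stream'.const {y})).get () := by
    rw [emits_iff_of_realizes hk hP hxy, ← Stream'.append_append_stream]
    refine ⟨holdsAtLeast_append_stream (P := (x ∈ ·)) ?_ _,
      HoldsAtLeast.append_stream (P := (y ∈ ·)) (holdsAtLeast_const rfl k) _⟩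
    simp only [r, List.countP_append, List.countP_replicate, Set.mem_singleton, decide_true,
      if_true]
    omega
  have hnot : ¬ P₂.Emits (p' ++ₛ Stream'.const ∅).get () := fun h =>
    not_holdsAtLeast_append_const (P := (x ∈ ·)) (Set.notMem_empty x) hp'
      ((emits_iff_of_realizes hk hP hxy _).mp h).1
  have := ((emits_iff_of_realizes hk hP hxy _).mp (P₂.emits_of_run_eq hrun' hemits hnot)).1
  rw [← Stream'.append_append_stream] at this
  refine not_holdsAtLeast_append_const (P := (x ∈ ·)) hx ?_ this
  simp only [r, List.countP_append, List.countP_replicate, Set.mem_singleton, decide_true,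
    if_true]
  omega

theorem sq_le_card_of_realizes [Fintype S₂] (hk : 1 ≤ k)
    (hP : P₂.Realizes ((phi14 k).map (Sum.map id (Sum.elim Empty.elim id)))) :
    k ^ 2 ≤ Fintype.card S₂ := by
  let v : Unit ⊕ Unit := .inl ()
  let h : Unit ⊕ Unit := .inr ()
  let pre (a b : ℕ) : List (Set (Unit ⊕ Unit)) := List.replicate a {v} ++ List.replicate b {h}
  have hv (a b : ℕ) : (pre a b).countP (v ∈ ·) = a := by
    simp [pre, v, h, List.countP_replicate]
  have hh (a b : ℕ) : (pre a b).countP (h ∈ ·) = b := by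
    simp [pre, v, h, List.countP_replicate]
  have hinj : Function.Injective fun ab : Fin k × Fin k =>
      P₂.run (pre ab.1 ab.2 ++ₛ Stream'.const ∅).get (pre ab.1 ab.2).length := by
    rintro ⟨a, b⟩ ⟨a', b'⟩ heq
    have hvh : v ≠ h := Sum.inl_ne_inr
    rcases lt_trichotomy a a' with ha | rfl | ha
    · exact absurd heq (run_ne_of_countP_lt hk hP hvh (by simpa [hv]) (by simp [hv]))
    · rcases lt_trichotomy b b' with hb | rfl | hb
      · exact absurd heq (run_ne_of_countP_lt hk hP hvh.symm (by simpa [hh]) (by simp [hh]))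
      · rfl
      · exact absurd heq.symm (run_ne_of_countP_lt hk hP hvh.symm (by simpa [hh]) (by simp [hh]))
    · exact absurd heq.symm (run_ne_of_countP_lt hk hP hvh (by simpa [hv]) (by simp [hv]))
  simpa [sq] using Fintype.card_le_of_injective _ hinj

end Pipeline

section CountingTGE

variable {k : ℕ}

noncomputable def capSucc (k : ℕ) (s : Fin (k + 1)) (x : Set Unit) : Fin (k + 1) :=
  ⟨min (s + if () ∈ x then 1 else 0) k, by omega⟩

theorem val_eq_min_count_of_capSucc {c : ℕ → Fin (k + 1)} {w : ℕ → Set Unit}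
    (h₀ : c 0 = 0) (hsucc : ∀ j, c (j + 1) = capSucc k (c j) (w j)) (j : ℕ) :
    (c j : ℕ) = min (count (fun i => () ∈ w i) j) k := by
  induction j with
  | zero => simp [h₀, Nat.count_zero]
  | succ j ih =>
    rw [hsucc, capSucc, Nat.count_succ]
    simp only [ih]
    split_ifs <;> omega

noncomputable def countingTGE (k : ℕ) : TGE Unit Unit Empty Unit (Fin (k + 1)) (Fin (k + 1)) where
  init := 0
  m0 := 0
  trans := capSucc k
  out s x := (∅, fun m y =>
    (capSucc k m y, {_d | capSucc k s x = Fin.last k ∧ capSucc k m y = Fin.last k}))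

theorem countingTGE_run_val (wV : ℕ → Set Unit) (j : ℕ) :
    ((countingTGE k).run wV j : ℕ) = min (count (fun i => () ∈ wV i) j) k :=
  val_eq_min_count_of_capSucc rfl (fun _ => rfl) j

theorem countingTGE_mem_val (wV wH : ℕ → Set Unit) (j : ℕ) :
    ((countingTGE k).mem wV wH j : ℕ) = min (count (fun i => () ∈ wH i) j) k :=
  val_eq_min_count_of_capSucc rfl (fun _ => rfl) j

theorem mem_countingTGE_guided (wV wH : ℕ → Set Unit) (j : ℕ) :
    () ∈ (countingTGE k).guided wV wH j ↔
      k ≤ count (() ∈ wV ·) (j + 1) ∧ k ≤ count (() ∈ wH ·) (j + 1) := by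
  change (countingTGE k).run wV (j + 1) = Fin.last k ∧
    (countingTGE k).mem wV wH (j + 1) = Fin.last k ↔ _
  simp only [Fin.ext_iff, Fin.val_last, countingTGE_run_val, countingTGE_mem_val]
  omega

theorem countingTGE_realizes (hk : 1 ≤ k) : (countingTGE k).Realizes (phi14 k) := by
  intro wV wH
  rw [sat_phi14 hk]
  simp only [TGE.comp, Set.mem_union, Set.mem_image, reduceCtorEq, and_false, exists_const,
    IsEmpty.exists_iff, false_or, Sum.inr.injEq, exists_eq_right, and_true, Sum.inl.injEq,
    or_false, Unique.exists_iff, PUnit.default_eq_unit, mem_countingTGE_guided,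
    holdsAtLeast_and_holdsAtLeast_iff]
  constructor
  · rintro ⟨j, hj⟩
    exact ⟨j + 1, hj⟩
  · rintro ⟨n, hv, hh⟩
    exact ⟨n, hv.trans (Nat.count_monotone _ n.le_succ),
      hh.trans (Nat.count_monotone _ n.le_succ)⟩

end CountingTGE

end

/-- `φ_k` is `({v},{h},∅,{d})`-realizable by a TGE whose state
space and memory both have size `O(k)` (at most `k+1`), whereas in the
distributed pipeline architecture without the program channel, the process
`P₂` — a transducer reading both `v` and `h` and producing `d` — needs at
least `k²` states. -/
theorem stmt14 (k : ℕ) (hk : 1 ≤ k) :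
    (∃ (S M : Type) (_ : Fintype S) (_ : Fintype M)
        (T : TGE Unit Unit Empty Unit S M),
        Fintype.card S ≤ k + 1 ∧ Fintype.card M ≤ k + 1 ∧
          T.Realizes (phi14 k)) ∧
    (∀ (S₂ : Type) [Fintype S₂] (P₂ : Transducer (Unit ⊕ Unit) Unit S₂),
        P₂.Realizes ((phi14 k).map (Sum.map id (Sum.elim Empty.elim id))) →
        k ^ 2 ≤ Fintype.card S₂) :=
  ⟨⟨Fin (k + 1), Fin (k + 1), inferInstance, inferInstance, countingTGE k,
      (Fintype.card_fin _).le, (Fintype.card_fin _).le, countingTGE_realizes hk⟩,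
    fun _ _ _ hP => sq_le_card_of_realizes hk hP⟩
end

section
/- G(i ↔ X o) with hidden i and guided o is (∅,{i},∅,{o})-realizable by a one-state TGE with environment memory of size 2 (one register storing the previous value of i), and is not realizable with environment memory of size 1: any memoryless program sequence produces the same output at step j+1 on two inputs that differ only at position j, violating the specification on one of them. -/
/-- `G(i ↔ X o)` with hidden `i` and guided `o`. -/
def phi18 : LTL ((Empty ⊕ Unit) ⊕ (Empty ⊕ Unit)) :=
  LTL.G (LTL.iff_ (.atom (.inl (.inr ()))) (LTL.next (.atom (.inr (.inr ())))))

section Aux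

open Classical

lemma sat_G_iff {α : Type} (w : ℕ → Set α) (ψ : LTL α) :
    LTL.sat w (LTL.G ψ) ↔ ∀ j, LTL.satAt w j ψ := by
  simp only [LTL.sat, LTL.G, LTL.F, LTL.satAt]
  constructor
  · intro h j
    by_contra hj
    exact h ⟨j, Nat.zero_le j, hj, fun _ _ _ => trivial⟩
  · rintro h ⟨k, _, hk, _⟩
    exact hk (h k)

lemma mem_comp_iff_hidden {S M : Type} (T : TGE Empty Unit Empty Unit S M)
    (wV : ℕ → Set Empty) (wH : ℕ → Set Unit) (j : ℕ) :
    (Sum.inl (Sum.inr ()) : (Empty ⊕ Unit) ⊕ (Empty ⊕ Unit)) ∈ T.comp wV wH j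
      ↔ () ∈ wH j := by
  simp only [TGE.comp]
  simp
  exact ⟨fun ⟨⟨⟩, h⟩ => h, fun h => ⟨(), h⟩⟩

lemma mem_comp_iff_guided {S M : Type} (T : TGE Empty Unit Empty Unit S M)
    (wV : ℕ → Set Empty) (wH : ℕ → Set Unit) (j : ℕ) :
    (Sum.inr (Sum.inr ()) : (Empty ⊕ Unit) ⊕ (Empty ⊕ Unit)) ∈ T.comp wV wH j
      ↔ () ∈ T.guided wV wH j := by
  simp only [TGE.comp]
  simp
  exact ⟨fun ⟨⟨⟩, h⟩ => h, fun h => ⟨(), h⟩⟩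

/-- The witnessing TGE: env memory stores the last value of `i`;
the guided output is true iff the memory is `1`. -/
noncomputable def T18 : TGE Empty Unit Empty Unit Unit (Fin 2) where
  init := ()
  m0 := 0
  trans := fun _ _ => ()
  out := fun _ _ => (∅, fun m i =>
    (if () ∈ i then 1 else 0, if m = 1 then Set.univ else ∅))

lemma T18_mem (wV : ℕ → Set Empty) (wH : ℕ → Set Unit) (j : ℕ) :
    T18.mem wV wH (j + 1) = if () ∈ wH j then 1 else 0 := rfl

lemma T18_guided (wV : ℕ → Set Empty) (wH : ℕ → Set Unit) (j : ℕ) :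
    T18.guided wV wH j = if T18.mem wV wH j = 1 then Set.univ else ∅ := rfl

end Aux

/-- `G(i ↔ X o)` is `(∅,{i},∅,{o})`-realizable by a one-state
TGE with environment memory of size 2, and is not realizable by any TGE with
environment memory of size 1. -/
theorem stmt18 :
    (∃ T : TGE Empty Unit Empty Unit Unit (Fin 2), T.Realizes phi18) ∧
    (∀ (S M : Type) [Fintype M], Fintype.card M = 1 →
        ∀ T : TGE Empty Unit Empty Unit S M, ¬ T.Realizes phi18) := by
  constructor
  · refine ⟨T18, ?_⟩
    intro wV wH
    rw [phi18, sat_G_iff]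
    intro j
    have hout : ∀ k, ((Sum.inr (Sum.inr ()) : (Empty ⊕ Unit) ⊕ (Empty ⊕ Unit))
        ∈ T18.comp wV wH (k+1) ↔ () ∈ wH k) := by
      intro k
      rw [mem_comp_iff_guided, T18_guided, T18_mem]
      by_cases h : () ∈ wH k <;> simp [h]
    simp only [LTL.iff_, LTL.satAt]
    rw [mem_comp_iff_hidden, hout j]
    tauto
  · intro S M _ hM T hreal
    haveI : Subsingleton M := Fintype.card_le_one_iff_subsingleton.mp (le_of_eq hM)
    set wV : ℕ → Set Empty := fun _ => ∅ with hwV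
    set wH0 : ℕ → Set Unit := fun _ => ∅ with hwH0
    set wH1 : ℕ → Set Unit := fun j => if j = 0 then Set.univ else ∅ with hwH1
    -- the guided outputs at step 1 coincide
    have hg : T.guided wV wH0 1 = T.guided wV wH1 1 := by
      have hm : T.mem wV wH0 1 = T.mem wV wH1 1 := Subsingleton.elim _ _
      have hw : wH0 1 = wH1 1 := by simp [hwH0, hwH1]
      simp only [TGE.guided, hm, hw]
    have h0 := (sat_G_iff _ _).mp (hreal wV wH0) 0
    have h1 := (sat_G_iff _ _).mp (hreal wV wH1) 0
    simp only [LTL.iff_, LTL.satAt] at h0 h1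
    rw [mem_comp_iff_hidden, mem_comp_iff_guided] at h0 h1
    have hh0 : () ∉ wH0 0 := by simp [hwH0]
    have hh1 : () ∈ wH1 0 := by simp [hwH1]
    rw [hg] at h0
    tauto
end
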